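/- Let (Ω, μ) be a probability space, M : Ω → Bool a measurable random variable with 0 < μ(M = true) < 1, and let s_o : Ω → E and s_u : Ω → F be measurable random variables into standard Borel spaces (the observable behaviors of the original and unlearned models). Let δ = g ∘ (s_o, s_u) for a measurable map g : E × F → G into a standard Borel space G. If the conditional distribution of δ given M = true differs from the conditional distribution of δ given M = false, then the dual-view mutual information is strictly positive: klDiv(law(M, (s_o, s_u)) ‖ law(M) ⊗ law(s_o, s_u)) > 0. -/
import Mathlib


open MeasureTheory
open scoped ENNReal Classical

/-- Kullback–Leibler divergence with values in `[0, ∞]`. -/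
noncomputable def klDiv {α : Type*} [MeasurableSpace α] (μ ν : Measure α) : ℝ≥0∞ :=
  if μ ≪ ν ∧ Integrable (llr μ ν) μ then ENNReal.ofReal (∫ x, llr μ ν x ∂μ) else ⊤

/-- The conditional distribution of `δ` given the event `A`: the pushforward under `δ`
of the normalized restriction `μ(· ∩ A) / μ(A)`. -/
noncomputable def condLaw {Ω E : Type*} [MeasurableSpace Ω] [MeasurableSpace E]
    (μ : Measure Ω) (δ : Ω → E) (A : Set Ω) : Measure E :=
  ((μ A)⁻¹ • μ.restrict A).map δ

lemma aux_nonneg {x : ℝ} (hx : 0 ≤ x) : 0 ≤ x * Real.log x - x + 1 := by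
  rcases eq_or_lt_of_le hx with h0 | h0
  · simp [← h0]
  have hinv : Real.log x⁻¹ ≤ x⁻¹ - 1 := Real.log_le_sub_one_of_pos (by positivity)
  rw [Real.log_inv] at hinv
  nlinarith [mul_le_mul_of_nonneg_left hinv h0.le, mul_inv_cancel₀ h0.ne']

lemma aux_eq_one {x : ℝ} (hx : 0 ≤ x) (h : x * Real.log x - x + 1 ≤ 0) : x = 1 := by
  rcases eq_or_lt_of_le hx with h0 | h0
  · exfalso; rw [← h0] at h; norm_num at h
  by_contra hne
  have hinv : Real.log x⁻¹ < x⁻¹ - 1 :=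
    Real.log_lt_sub_one_of_pos (by positivity) (fun h' => hne (by rwa [inv_eq_one] at h'))
  rw [Real.log_inv] at hinv
  nlinarith [mul_lt_mul_of_pos_left hinv h0, mul_inv_cancel₀ h0.ne']

/-- Gibbs' inequality, equality case: if the KL integral is nonpositive, the measures agree. -/
lemma gibbs_eq {α : Type*} [MeasurableSpace α] (P Q : Measure α)
    [IsProbabilityMeasure P] [IsProbabilityMeasure Q]
    (hac : P ≪ Q) (hint : Integrable (llr P Q) P)
    (hle : ∫ x, llr P Q x ∂P ≤ 0) : P = Q := by
  have hf_int : Integrable (fun x => (P.rnDeriv Q x).toReal) Q :=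
    Measure.integrable_toReal_rnDeriv
  have hf_integral : ∫ x, (P.rnDeriv Q x).toReal ∂Q = 1 := by
    rw [Measure.integral_toReal_rnDeriv hac]; simp
  have hfl_int : Integrable (fun x => (P.rnDeriv Q x).toReal * llr P Q x) Q := by
    have := (MeasureTheory.integrable_rnDeriv_smul_iff (f := llr P Q) hac).mpr hint
    simpa [smul_eq_mul] using this
  have hfl : ∫ x, (P.rnDeriv Q x).toReal * llr P Q x ∂Q = ∫ x, llr P Q x ∂P := by
    have := MeasureTheory.integral_rnDeriv_smul (f := llr P Q) hac
    simpa [smul_eq_mul] using this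
  set G : α → ℝ := fun x =>
    (P.rnDeriv Q x).toReal * llr P Q x - (P.rnDeriv Q x).toReal + 1 with hG
  have hG_int : Integrable G Q := (hfl_int.sub hf_int).add (integrable_const 1)
  have hG_nonneg : ∀ x, 0 ≤ G x := fun x => aux_nonneg ENNReal.toReal_nonneg
  have hG_integral : ∫ x, G x ∂Q = ∫ x, llr P Q x ∂P := by
    have e1 : ∫ x, G x ∂Q
        = (∫ x, ((P.rnDeriv Q x).toReal * llr P Q x - (P.rnDeriv Q x).toReal) ∂Q)
          + ∫ _, (1 : ℝ) ∂Q := integral_add (hfl_int.sub hf_int) (integrable_const 1)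
    have e2 : ∫ x, ((P.rnDeriv Q x).toReal * llr P Q x - (P.rnDeriv Q x).toReal) ∂Q
        = ∫ x, llr P Q x ∂P - 1 := by
      rw [integral_sub hfl_int hf_int, hfl, hf_integral]
    rw [e1, e2, integral_const]
    simp
  have hG_zero : ∫ x, G x ∂Q = 0 :=
    le_antisymm (hG_integral ▸ hle) (integral_nonneg hG_nonneg)
  have hG_ae : G =ᵐ[Q] 0 :=
    (integral_eq_zero_iff_of_nonneg hG_nonneg hG_int).mp hG_zero
  have hf_ae : (fun x => (P.rnDeriv Q x).toReal) =ᵐ[Q] fun _ => 1 := by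
    filter_upwards [hG_ae] with x hx
    exact aux_eq_one ENNReal.toReal_nonneg (le_of_eq hx)
  have hrn_ae : P.rnDeriv Q =ᵐ[Q] fun _ => (1 : ℝ≥0∞) := by
    filter_upwards [hf_ae, Measure.rnDeriv_lt_top P Q] with x hx hxt
    rw [← ENNReal.ofReal_toReal hxt.ne, hx]
    simp
  calc P = Q.withDensity (P.rnDeriv Q) := (Measure.withDensity_rnDeriv_eq P Q hac).symm
    _ = Q.withDensity (fun _ => (1 : ℝ≥0∞)) := withDensity_congr_ae hrn_ae
    _ = Q := by simp

/-- If the behavioral impact `δ = g ∘ (s_o, s_u)` has different conditional distributions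
given `M = true` and `M = false`, then the dual-view mutual information is positive. -/
theorem dualView_mutualInfo_pos {Ω E F G : Type*} [MeasurableSpace Ω]
    [MeasurableSpace E] [StandardBorelSpace E] [MeasurableSpace F] [StandardBorelSpace F]
    [MeasurableSpace G] [StandardBorelSpace G]
    (μ : Measure Ω) [IsProbabilityMeasure μ]
    (M : Ω → Bool) (s_o : Ω → E) (s_u : Ω → F) (g : E × F → G)
    (hM : Measurable M) (hso : Measurable s_o) (hsu : Measurable s_u) (hg : Measurable g)
    (h0 : 0 < μ {ω | M ω = true}) (h1 : μ {ω | M ω = true} < 1)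
    (δ : Ω → G) (hδ : δ = g ∘ (fun ω => (s_o ω, s_u ω)))
    (hne : condLaw μ δ {ω | M ω = true} ≠ condLaw μ δ {ω | M ω = false}) :
    0 < klDiv (μ.map (fun ω => (M ω, (s_o ω, s_u ω))))
        ((μ.map M).prod (μ.map (fun ω => (s_o ω, s_u ω)))) := by
  have hXm : Measurable (fun ω => (s_o ω, s_u ω)) := hso.prodMk hsu
  have hMXm : Measurable (fun ω => (M ω, (s_o ω, s_u ω))) := hM.prodMk hXm
  have hPprob : IsProbabilityMeasure (μ.map (fun ω => (M ω, (s_o ω, s_u ω)))) :=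
    Measure.isProbabilityMeasure_map hMXm.aemeasurable
  have hMprob : IsProbabilityMeasure (μ.map M) := Measure.isProbabilityMeasure_map hM.aemeasurable
  have hXprob : IsProbabilityMeasure (μ.map (fun ω => (s_o ω, s_u ω))) :=
    Measure.isProbabilityMeasure_map hXm.aemeasurable
  rw [pos_iff_ne_zero]
  intro hkl
  rw [klDiv] at hkl
  split_ifs at hkl with hcond
  · obtain ⟨hac, hint⟩ := hcond
    have hle := ENNReal.ofReal_eq_zero.mp hkl
    have hPQ := gibbs_eq _ _ hac hint hle
    -- independence of M and (s_o, s_u)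
    have key : ∀ (b : Bool) (S : Set (E × F)), MeasurableSet S →
        μ ({ω | M ω = b} ∩ (fun ω => (s_o ω, s_u ω)) ⁻¹' S)
          = μ {ω | M ω = b} * μ ((fun ω => (s_o ω, s_u ω)) ⁻¹' S) := by
      intro b S hS
      have h1' : (μ.map (fun ω => (M ω, (s_o ω, s_u ω)))) ({b} ×ˢ S)
          = ((μ.map M).prod (μ.map (fun ω => (s_o ω, s_u ω)))) ({b} ×ˢ S) := by rw [hPQ]
      rw [Measure.map_apply hMXm ((measurableSet_singleton b).prod hS), Measure.prod_prod,
        Measure.map_apply hM (measurableSet_singleton b), Measure.map_apply hXm hS] at h1'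
      have hset : (fun ω => (M ω, (s_o ω, s_u ω))) ⁻¹' ({b} ×ˢ S)
          = {ω | M ω = b} ∩ (fun ω => (s_o ω, s_u ω)) ⁻¹' S := by
        ext ω; simp [Set.mem_prod, eq_comm, and_comm]
      rw [hset] at h1'
      exact h1'
    have hAt : MeasurableSet {ω | M ω = true} := hM (measurableSet_singleton true)
    have hAf_val : μ {ω | M ω = false} = 1 - μ {ω | M ω = true} := by
      have hc : {ω | M ω = false} = {ω | M ω = true}ᶜ := by
        ext ω; by_cases h : M ω <;> simp [h]
      rw [hc, measure_compl hAt (measure_ne_top _ _), measure_univ]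
    have hμf_ne : μ {ω | M ω = false} ≠ 0 := by
      rw [hAf_val]
      intro h
      rw [tsub_eq_zero_iff_le] at h
      exact absurd h (not_le.mpr h1)
    have hcondLaw : ∀ b : Bool, μ {ω | M ω = b} ≠ 0 →
        condLaw μ δ {ω | M ω = b} = (μ.map (fun ω => (s_o ω, s_u ω))).map g := by
      intro b hb
      have hbt : μ {ω | M ω = b} ≠ ∞ := measure_ne_top _ _
      have hmap : (μ.restrict {ω | M ω = b}).map (fun ω => (s_o ω, s_u ω))
          = μ {ω | M ω = b} • μ.map (fun ω => (s_o ω, s_u ω)) := by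
        ext S hS
        rw [Measure.map_apply hXm hS, Measure.restrict_apply (hXm hS), Set.inter_comm,
          key b S hS, Measure.smul_apply, Measure.map_apply hXm hS, smul_eq_mul]
      rw [condLaw, hδ]
      calc ((μ {ω | M ω = b})⁻¹ • μ.restrict {ω | M ω = b}).map
            (g ∘ fun ω => (s_o ω, s_u ω))
          = (((μ {ω | M ω = b})⁻¹ • μ.restrict {ω | M ω = b}).map
              (fun ω => (s_o ω, s_u ω))).map g := (Measure.map_map hg hXm).symm
        _ = ((μ {ω | M ω = b})⁻¹ •
              ((μ.restrict {ω | M ω = b}).map (fun ω => (s_o ω, s_u ω)))).map g := by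
            rw [Measure.map_smul]
        _ = (μ.map (fun ω => (s_o ω, s_u ω))).map g := by
            rw [hmap, smul_smul, ENNReal.inv_mul_cancel hb hbt, one_smul]
    exact hne ((hcondLaw true h0.ne').trans (hcondLaw false hμf_ne).symm)
  · exact (ENNReal.top_ne_zero) hkl
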